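/- Let P be a finite pure poset with height function h on P̂ and h_P = h(1̂). Then the translate Δ := (Σ_{u∈P} h(u)·χ_u) − h_P·Δ(P) of the dilated order polytope is a reflexive polytope: the origin is its unique interior lattice point. -/

import Mathlib

/-- The order polytope of a finite poset `P`. -/
def orderPolytope (P : Type*) [PartialOrder P] : Set (P → ℝ) :=
  {x | (∀ u : P, x u ∈ Set.Icc (0 : ℝ) 1) ∧ ∀ u v : P, u ≤ v → x u ≤ x v}

/-- `h` is the height function of a poset `Q`. -/
def IsHeightFn {Q : Type*} [PartialOrder Q] (h : Q → ℕ) : Prop :=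
  ∀ u : Q, IsGreatest {n : ℕ | ∃ c : Fin (n + 1) → Q, StrictMono c ∧ c (Fin.last n) = u} (h u)

/-- A maximal chain of length `n` in a bounded poset. -/
def IsMaxChain' {Q : Type*} [PartialOrder Q] [BoundedOrder Q] {n : ℕ}
    (c : Fin (n + 1) → Q) : Prop :=
  c 0 = ⊥ ∧ c (Fin.last n) = ⊤ ∧ ∀ i : Fin n, c i.castSucc ⋖ c i.succ

/-!
Extend functions on `P` to `P̂` by prescribing their values at `0̂` and `1̂`. Then `Δ(P)` consists
of the `x` whose extension by `0, 1` is monotone, and its interior of those whose extension is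
strictly monotone. Through the affine homeomorphism `x ↦ h - h_P • x`, a point `y` is interior to
`Δ` iff `M = h - y`, extended by `0, h_P`, is strictly monotone on `P̂`; for `y = 0` this is `h`
itself. For a lattice point `M` is integer valued: a longest chain below `u` gives `h u ≤ M u`,
and a maximal chain through `u` has length `h_P` by purity, with at most `h u` steps below `u`, so
`M` climbs at least `h_P - h u` from `u` to `1̂`, whence `M u ≤ h u`. Thus `M = h` and `y = 0`.
-/

open Set Filter Topology

section HatExtend

variable {P α : Type*}

def hatExtend (a b : α) (x : P → α) : WithBot (WithTop P) → α
  | ⊥ => a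
  | (⊤ : WithTop P) => b
  | ((u : P) : WithTop P) => x u

@[simp] lemma hatExtend_bot (a b : α) (x : P → α) : hatExtend a b x ⊥ = a := rfl
@[simp] lemma hatExtend_top (a b : α) (x : P → α) : hatExtend a b x (⊤ : WithTop P) = b := rfl
@[simp] lemma hatExtend_coe (a b : α) (x : P → α) (u : P) :
    hatExtend a b x ((u : WithTop P) : WithBot (WithTop P)) = x u := rfl

lemma comp_hatExtend {β : Type*} (f : α → β) (a b : α) (x : P → α) :
    f ∘ hatExtend a b x = hatExtend (f a) (f b) (f ∘ x) := by
  funext q; rcases q with _ | (_ | u) <;> rfl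

lemma hatExtend_restrict (g : WithBot (WithTop P) → α) :
    hatExtend (g ⊥) (g (⊤ : WithTop P)) (fun u : P => g ((u : WithTop P) : WithBot (WithTop P))) =
      g := by
  funext q; rcases q with _ | (_ | u) <;> rfl

lemma continuous_hatExtend [TopologicalSpace α] (a b : α) :
    Continuous (hatExtend a b : (P → α) → WithBot (WithTop P) → α) := by
  refine continuous_pi fun q => ?_
  rcases q with _ | (_ | u)
  exacts [continuous_const, continuous_const, continuous_apply u]

variable [Preorder P] [Preorder α]

lemma monotone_hatExtend_iff {a b : α} {x : P → α} :
    Monotone (hatExtend a b x) ↔ a ≤ b ∧ (∀ u, x u ∈ Icc a b) ∧ Monotone x := by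
  simp only [WithBot.monotone_iff, WithTop.monotone_iff, WithTop.forall, hatExtend_coe,
    hatExtend_top, hatExtend_bot, mem_Icc, forall_and]
  tauto

lemma strictMono_hatExtend_iff {a b : α} {x : P → α} :
    StrictMono (hatExtend a b x) ↔ a < b ∧ (∀ u, x u ∈ Ioo a b) ∧ StrictMono x := by
  simp only [WithBot.strictMono_iff, WithTop.strictMono_iff, WithTop.forall, hatExtend_coe,
    hatExtend_top, hatExtend_bot, mem_Ioo, forall_and]
  tauto

end HatExtend

lemma isOpen_setOf_strictMono {ι α : Type*} [Preorder ι] [Finite ι] [TopologicalSpace α]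
    [LinearOrder α] [OrderClosedTopology α] : IsOpen {f : ι → α | StrictMono f} := by
  simp only [StrictMono, ofPred_forall]
  exact isOpen_iInter_of_finite fun i => isOpen_iInter_of_finite fun j =>
    isOpen_iInter_of_finite fun _ => isOpen_lt (continuous_apply i) (continuous_apply j)

lemma exists_pos_add_smul_mem_of_mem_interior {E : Type*} [AddCommGroup E] [Module ℝ E]
    [TopologicalSpace E] [ContinuousAdd E] [ContinuousSMul ℝ E] {s : Set E} {x : E}
    (hx : x ∈ interior s) (v : E) : ∃ t : ℝ, 0 < t ∧ x + t • v ∈ s := by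
  have hlim : Tendsto (fun t : ℝ => x + t • v) (𝓝[>] 0) (𝓝 x) := by
    have hcont : Continuous fun t : ℝ => x + t • v := by fun_prop
    simpa using (hcont.tendsto 0).mono_left nhdsWithin_le_nhds
  obtain ⟨t, hts, ht⟩ :=
    ((hlim.eventually (mem_interior_iff_mem_nhds.1 hx)).and self_mem_nhdsWithin).exists
  exact ⟨t, ht, hts⟩

section OrderPolytope

variable {P : Type*} [PartialOrder P]

lemma orderPolytope_eq_setOf_monotone :
    orderPolytope P = {x | Monotone (hatExtend 0 1 x)} := by
  ext x
  rw [mem_ofPred_eq, monotone_hatExtend_iff]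
  simp [orderPolytope, Monotone]

lemma interior_orderPolytope [Finite P] :
    interior (orderPolytope P) = {x | StrictMono (hatExtend 0 1 x)} := by
  classical
  refine Subset.antisymm (fun x hx => ?_) (interior_maximal ?_ ?_)
  · -- an interior point can be pushed a little along `±χ_u`, so no defining inequality is tight
    rw [mem_ofPred_eq, strictMono_hatExtend_iff]
    refine ⟨one_pos, fun u => ⟨?_, ?_⟩, fun u v huv => ?_⟩
    · obtain ⟨t, ht, hxt⟩ := exists_pos_add_smul_mem_of_mem_interior hx (-Pi.single u 1)
      have := (hxt.1 u).1
      simp only [smul_neg, Pi.add_apply, Pi.neg_apply, Pi.smul_apply, Pi.single_eq_same,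
        smul_eq_mul, mul_one, le_add_neg_iff_add_le, zero_add] at this
      linarith
    · obtain ⟨t, ht, hxt⟩ := exists_pos_add_smul_mem_of_mem_interior hx (Pi.single u 1)
      have := (hxt.1 u).2
      simp only [Pi.add_apply, Pi.smul_apply, Pi.single_eq_same, smul_eq_mul, mul_one] at this
      linarith
    · obtain ⟨t, ht, hxt⟩ := exists_pos_add_smul_mem_of_mem_interior hx (Pi.single u 1)
      have := hxt.2 u v huv.le
      simp only [Pi.add_apply, Pi.smul_apply, Pi.single_eq_same, smul_eq_mul, mul_one,
        Pi.single_eq_of_ne huv.ne', mul_zero, add_zero] at this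
      linarith
  · rw [orderPolytope_eq_setOf_monotone]
    exact fun x hx => hx.monotone
  · exact isOpen_setOf_strictMono.preimage (continuous_hatExtend 0 1)

def translatedOrderPolytope (c : P → ℝ) (H : ℝ) : Set (P → ℝ) :=
  {y | ∃ x ∈ orderPolytope P, y = fun u => c u - H * x u}

lemma mem_interior_translatedOrderPolytope_iff [Finite P] {c : P → ℝ} {H : ℝ} (hH : 0 < H)
    {y : P → ℝ} :
    y ∈ interior (translatedOrderPolytope c H) ↔ StrictMono (hatExtend 0 H (c - y)) := by
  let B : (P → ℝ) ≃ₜ (P → ℝ) := ((Homeomorph.neg _).trans (Homeomorph.addLeft c)).trans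
    (Homeomorph.smulOfNeZero H⁻¹ (inv_ne_zero hH.ne'))
  have hB (y : P → ℝ) : B y = H⁻¹ • (c - y) := by simp [B, sub_eq_add_neg]
  have hpre : translatedOrderPolytope c H = B ⁻¹' orderPolytope P := by
    ext y
    rw [mem_preimage, hB]
    constructor
    · rintro ⟨x, hx, rfl⟩
      convert hx
      funext u
      simp [hH.ne']
    · exact fun hy => ⟨_, hy, by funext u; simp [hH.ne']⟩
  have hscale : hatExtend 0 H (c - y) = (H * ·) ∘ hatExtend 0 1 (H⁻¹ • (c - y)) := by
    rw [comp_hatExtend]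
    congr 1 <;> simp [Function.comp_def, hH.ne', Pi.sub_def]
  rw [hpre, ← B.preimage_interior, mem_preimage, interior_orderPolytope, mem_ofPred_eq, hscale,
    hB]
  exact ⟨(strictMono_mul_left_of_pos hH).comp, fun hmono => by
    simpa [Function.comp_def, hH.ne'] using (strictMono_mul_left_of_pos (inv_pos.2 hH)).comp hmono⟩

end OrderPolytope

lemma StrictMono.apply_add_index_le_apply_add_index_int {n : ℕ} {g : Fin (n + 1) → ℤ}
    (hg : StrictMono g) {i j : Fin (n + 1)} (hij : i ≤ j) : g i + j ≤ g j + i := by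
  have hmono : Monotone fun k : Fin (n + 1) => g k - k := Fin.monotone_iff_le_succ.2 fun k => by
    have := hg k.castSucc_lt_succ
    simp only [Fin.val_castSucc, Fin.val_succ]
    push_cast
    omega
  have := hmono hij
  simp only at this
  omega

def IsPure (Q : Type*) [PartialOrder Q] [BoundedOrder Q] : Prop :=
  ∀ (n m : ℕ) (c : Fin (n + 1) → Q) (c' : Fin (m + 1) → Q),
    IsMaxChain' c → IsMaxChain' c' → n = m

section Height

variable {Q : Type*} [PartialOrder Q]

lemma RelSeries.strictMono_of_covBy (t : RelSeries {(a, b) : Q × Q | a ⋖ b}) : StrictMono t :=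
  Fin.strictMono_iff_lt_succ.2 fun i => (t.step i).lt

lemma RelSeries.isMaxChain' [BoundedOrder Q] (t : RelSeries {(a, b) : Q × Q | a ⋖ b})
    (hbot : t.head = ⊥) (htop : t.last = ⊤) : IsMaxChain' t.toFun :=
  ⟨hbot, htop, t.step⟩

namespace IsHeightFn

variable {h : Q → ℕ}

lemma strictMono (hh : IsHeightFn h) : StrictMono h := by
  intro a b hab
  obtain ⟨c, hc, hca⟩ := (hh a).1
  refine Nat.lt_of_succ_le ((hh b).2 ⟨Fin.snoc c b, ?_, Fin.snoc_last _ _⟩)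
  refine Fin.strictMono_iff_lt_succ.2 (Fin.lastCases ?_ fun i => ?_)
  · simpa [hca] using hab
  · rw [Fin.succ_castSucc, Fin.snoc_castSucc, Fin.snoc_castSucc]
    exact hc i.castSucc_lt_succ

lemma apply_bot [OrderBot Q] (hh : IsHeightFn h) : h ⊥ = 0 := by
  obtain ⟨c, hc, hcbot⟩ := (hh ⊥).1
  by_contra hne
  have hpos : (0 : Fin (h ⊥ + 1)) < Fin.last _ :=
    Fin.lt_def.2 (by simpa using Nat.pos_of_ne_zero hne)
  exact not_lt_bot (hcbot ▸ hc hpos)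

lemma add_le_of_strictMono [OrderBot Q] (hh : IsHeightFn h) {M : Q → ℤ} (hM : StrictMono M)
    (a : Q) : M ⊥ + h a ≤ M a := by
  obtain ⟨c, hc, hca⟩ := (hh a).1
  have := (hM.comp hc).apply_add_index_le_apply_add_index_int (Fin.zero_le (Fin.last (h a)))
  simp only [Function.comp_apply, hca, Fin.val_last, Fin.val_zero] at this
  have := hM.monotone (bot_le (a := c 0))
  omega

lemma eq_of_strictMono [BoundedOrder Q] [Finite Q] (hh : IsHeightFn h) (hpure : IsPure Q)
    {M : Q → ℤ} (hM : StrictMono M) (hbot : M ⊥ = 0) (htop : M ⊤ = h ⊤) (a : Q) :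
    M a = h a := by
  obtain ⟨c₀, hc₀, -⟩ := (hh ⊤).1
  obtain ⟨t₀, i₀, -, ht₀bot, ht₀top⟩ :=
    (LTSeries.mk (h ⊤) c₀ hc₀).exists_relSeries_covBy_and_head_eq_bot_and_last_eq_bot
  obtain ⟨t, i, hti, htbot, httop⟩ :=
    LTSeries.exists_relSeries_covBy_and_head_eq_bot_and_last_eq_bot (RelSeries.singleton _ a)
  have hlen : t.length = t₀.length :=
    hpure _ _ _ _ (t.isMaxChain' htbot httop) (t₀.isMaxChain' ht₀bot ht₀top)
  have hH : h ⊤ ≤ t₀.length := by simpa using Fintype.card_le_of_embedding i₀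
  have hta : t (i 0) = a := congrFun hti 0
  have hbelow : (i 0 : ℕ) ≤ h a := (hh a).2 ⟨fun k => t (Fin.castLE (i 0).isLt k),
    t.strictMono_of_covBy.comp (Fin.strictMono_castLE _), by convert hta using 2; ext; simp⟩
  have habove := (hM.comp t.strictMono_of_covBy).apply_add_index_le_apply_add_index_int
    (Fin.le_last (i 0))
  simp only [Function.comp_apply, hta, Fin.val_last] at habove
  rw [show t (Fin.last _) = ⊤ from httop, htop] at habove
  have := hh.add_le_of_strictMono hM a
  omega

end IsHeightFn

end Height

/-- For a finite pure poset `P` with height function `h` on `P̂` and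
`h_P = h(1̂)`, the translated dilated order polytope
`Δ = (Σ_u h(u)·χ_u) − h_P·Δ(P)` is reflexive in the sense that the origin is
its unique interior lattice point. -/
theorem stmt_15 (P : Type*) [Fintype P] [PartialOrder P]
    (h : WithBot (WithTop P) → ℕ) (hh : IsHeightFn h)
    (hpure : ∀ (n m : ℕ) (c : Fin (n + 1) → WithBot (WithTop P))
      (c' : Fin (m + 1) → WithBot (WithTop P)),
      IsMaxChain' c → IsMaxChain' c' → n = m) :
    (0 : P → ℝ) ∈ interior {y : P → ℝ | ∃ x ∈ orderPolytope P,
        y = fun (u : P) => (h ((u : WithTop P) : WithBot (WithTop P)) : ℝ) - (h ⊤ : ℝ) * x u} ∧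
    ∀ y : P → ℤ, (fun u => (y u : ℝ)) ∈ interior {y : P → ℝ | ∃ x ∈ orderPolytope P,
        y = fun (u : P) => (h ((u : WithTop P) : WithBot (WithTop P)) : ℝ) - (h ⊤ : ℝ) * x u} →
      y = 0 := by
  have hH : (0 : ℝ) < h ⊤ := by
    have := hh.strictMono (bot_lt_top : (⊥ : WithBot (WithTop P)) < ⊤)
    exact_mod_cast (Nat.zero_le _).trans_lt this
  let c : P → ℝ := fun u => h ((u : WithTop P) : WithBot (WithTop P))
  change (0 : P → ℝ) ∈ interior (translatedOrderPolytope c (h ⊤)) ∧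
    ∀ y : P → ℤ, (fun u => (y u : ℝ)) ∈ interior (translatedOrderPolytope c (h ⊤)) → y = 0
  simp only [mem_interior_translatedOrderPolytope_iff hH]
  refine ⟨?_, fun y hy => ?_⟩
  · have hext : hatExtend 0 (h ⊤ : ℝ) c = fun q => (h q : ℝ) := by
      simpa [hh.apply_bot] using hatExtend_restrict fun q => (h q : ℝ)
    rw [sub_zero, hext]
    exact Nat.strictMono_cast.comp hh.strictMono
  · let M : WithBot (WithTop P) → ℤ :=
      hatExtend 0 (h ⊤) fun u => h ((u : WithTop P) : WithBot (WithTop P)) - y u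
    have hcast : ((↑) : ℤ → ℝ) ∘ M = hatExtend 0 (h ⊤ : ℝ) (c - fun u => (y u : ℝ)) := by
      rw [comp_hatExtend]
      congr 1 <;> simp [Function.comp_def, Pi.sub_def, c]
    have hM : StrictMono M := fun a b hab => by
      have hlt := hy hab
      rw [← hcast] at hlt
      exact Int.cast_lt.1 hlt
    funext u
    simpa [M] using hh.eq_of_strictMono hpure hM rfl rfl ((u : WithTop P) : WithBot (WithTop P))
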